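/- arXiv:1806.07046 — 5 statements merged into one kernel-verified Lean document; each statement's English description precedes it below -/
import Mathlib

section
/- Boundary/interior identity: let σ₁, σ₂ be symmetric complex matrix-valued conductivities and q₁, q₂ symmetric complex matrix-valued Schrödinger potentials for which the Dirichlet-to-Neumann maps Λ_{σ₁,q₁}, Λ_{σ₂,q₂} are well defined. If u₁ solves the σ₁,q₁ Dirichlet problem with boundary data g₁ and u₂ solves the σ₂,q₂ Dirichlet problem with boundary data g₂, then g₂ᵀ(Λ_{σ₁,q₁} − Λ_{σ₂,q₂})g₁ = Σ_{e∈E} (∇u₂)(e)ᵀ (σ₁ − σ₂)(e) (∇u₁)(e) + Σ_{i∈V} u₂(i)ᵀ (q₁ − q₂)(i) u₁(i). -/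
open Matrix

/-- The `d`-dimensional discrete gradient. -/
def dgrad {V E : Type*} {d : ℕ} {K : Type*} [Field K] (e1 e2 : E → V)
    (u : V → Fin d → K) : E → Fin d → K :=
  fun e => u (e1 e) - u (e2 e)

/-- The matrix-weighted graph Laplacian `L_σ = ∇ᵀ diag(σ) ∇` applied to `u`. -/
noncomputable def dlap {V E : Type*} [Fintype E] [DecidableEq V] {d : ℕ} {K : Type*}
    [Field K] (e1 e2 : E → V) (σ : E → Matrix (Fin d) (Fin d) K)
    (u : V → Fin d → K) : V → Fin d → K :=
  fun i => ∑ e, ((if e1 e = i then (1 : K) else 0) - (if e2 e = i then 1 else 0)) •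
    (σ e *ᵥ dgrad e1 e2 u e)

/-- The Schrödinger operator `(L_σ + diag(q)) u`. -/
noncomputable def dschrod {V E : Type*} [Fintype E] [DecidableEq V] {d : ℕ}
    {K : Type*} [Field K] (e1 e2 : E → V) (σ : E → Matrix (Fin d) (Fin d) K)
    (q : V → Matrix (Fin d) (Fin d) K) (u : V → Fin d → K) : V → Fin d → K :=
  fun i => dlap e1 e2 σ u i + q i *ᵥ u i

lemma dot_sum {E : Type*} {d : ℕ} (s : Finset E) (v : Fin d → ℂ)
    (f : E → Fin d → ℂ) : v ⬝ᵥ (∑ e ∈ s, f e) = ∑ e ∈ s, v ⬝ᵥ f e := by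
  simp only [dotProduct, Finset.sum_apply, Finset.mul_sum]
  exact Finset.sum_comm

lemma ibp {V E : Type*} [Fintype V] [Fintype E] [DecidableEq V] {d : ℕ}
    (e1 e2 : E → V) (σ : E → Matrix (Fin d) (Fin d) ℂ)
    (q : V → Matrix (Fin d) (Fin d) ℂ) (u v : V → Fin d → ℂ) :
    ∑ i, v i ⬝ᵥ dschrod e1 e2 σ q u i =
      (∑ e, dgrad e1 e2 v e ⬝ᵥ (σ e *ᵥ dgrad e1 e2 u e)) +
      ∑ i, v i ⬝ᵥ (q i *ᵥ u i) := by
  simp only [dschrod, dotProduct_add, Finset.sum_add_distrib]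
  congr 1
  simp only [dlap, dot_sum, dotProduct_smul, smul_eq_mul]
  rw [Finset.sum_comm]
  refine Finset.sum_congr rfl fun e _ => ?_
  simp only [sub_mul, one_mul, zero_mul, ite_mul, Finset.sum_sub_distrib,
    Finset.sum_ite_eq, Finset.mem_univ, if_true, dgrad, sub_dotProduct]

lemma symm_swap {d : ℕ} (M : Matrix (Fin d) (Fin d) ℂ) (hM : M.IsSymm)
    (v u : Fin d → ℂ) : v ⬝ᵥ (M *ᵥ u) = u ⬝ᵥ (M *ᵥ v) := by
  rw [dotProduct_mulVec, ← mulVec_transpose, hM.eq, dotProduct_comm]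

lemma symm_sum {V E : Type*} [Fintype V] [Fintype E] [DecidableEq V] {d : ℕ}
    (e1 e2 : E → V) (σ : E → Matrix (Fin d) (Fin d) ℂ)
    (q : V → Matrix (Fin d) (Fin d) ℂ)
    (hσ : ∀ e, (σ e).IsSymm) (hq : ∀ i, (q i).IsSymm) (u v : V → Fin d → ℂ) :
    ∑ i, v i ⬝ᵥ dschrod e1 e2 σ q u i = ∑ i, u i ⬝ᵥ dschrod e1 e2 σ q v i := by
  rw [ibp, ibp]
  congr 1
  · exact Finset.sum_congr rfl fun e _ => symm_swap _ (hσ e) _ _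
  · exact Finset.sum_congr rfl fun i _ => symm_swap _ (hq i) _ _

/-- **boundary/interior identity.** If `u₁` solves the `σ₁,q₁`
Dirichlet problem with boundary data `g₁`, `u₂` solves the `σ₂,q₂` problem with data
`g₂`, and `w` solves the `σ₂,q₂` problem with data `g₁` (so that
`Λ_{σ₂,q₂} g₁ = ((L_{σ₂}+diag(q₂))w)_B`), then
`g₂ᵀ(Λ_{σ₁,q₁} − Λ_{σ₂,q₂})g₁ = Σ_e (∇u₂)(e)ᵀ(σ₁−σ₂)(e)(∇u₁)(e)
  + Σ_i u₂(i)ᵀ(q₁−q₂)(i)u₁(i)`. -/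
theorem boundary_interior_identity {V E : Type*} [Fintype V] [Fintype E]
    [DecidableEq V] {d : ℕ} (e1 e2 : E → V)
    (Bd : V → Prop) [DecidablePred Bd]
    (σ1 σ2 : E → Matrix (Fin d) (Fin d) ℂ) (q1 q2 : V → Matrix (Fin d) (Fin d) ℂ)
    (hσ1 : ∀ e, (σ1 e).IsSymm) (hσ2 : ∀ e, (σ2 e).IsSymm)
    (hq1 : ∀ i, (q1 i).IsSymm) (hq2 : ∀ i, (q2 i).IsSymm)
    (g1 g2 u1 u2 w : V → Fin d → ℂ)
    (hu1b : ∀ i, Bd i → u1 i = g1 i)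
    (hu1i : ∀ i, ¬ Bd i → dschrod e1 e2 σ1 q1 u1 i = 0)
    (hu2b : ∀ i, Bd i → u2 i = g2 i)
    (hu2i : ∀ i, ¬ Bd i → dschrod e1 e2 σ2 q2 u2 i = 0)
    (hwb : ∀ i, Bd i → w i = g1 i)
    (hwi : ∀ i, ¬ Bd i → dschrod e1 e2 σ2 q2 w i = 0) :
    (∑ j, if Bd j then
        g2 j ⬝ᵥ (dschrod e1 e2 σ1 q1 u1 j - dschrod e1 e2 σ2 q2 w j) else 0) =
      (∑ e, dgrad e1 e2 u2 e ⬝ᵥ ((σ1 e - σ2 e) *ᵥ dgrad e1 e2 u1 e)) +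
      ∑ i, u2 i ⬝ᵥ ((q1 i - q2 i) *ᵥ u1 i) := by
  have key : (∑ j, if Bd j then
        g2 j ⬝ᵥ (dschrod e1 e2 σ1 q1 u1 j - dschrod e1 e2 σ2 q2 w j) else 0)
      = (∑ j, u2 j ⬝ᵥ dschrod e1 e2 σ1 q1 u1 j)
        - ∑ j, u2 j ⬝ᵥ dschrod e1 e2 σ2 q2 w j := by
    rw [← Finset.sum_sub_distrib]
    refine Finset.sum_congr rfl fun j _ => ?_
    by_cases h : Bd j
    · rw [if_pos h, hu2b j h, dotProduct_sub]
    · rw [if_neg h, hu1i j h, hwi j h, dotProduct_zero, sub_zero]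
  have step2 : (∑ j, u2 j ⬝ᵥ dschrod e1 e2 σ2 q2 w j)
      = ∑ j, u2 j ⬝ᵥ dschrod e1 e2 σ2 q2 u1 j := by
    rw [symm_sum e1 e2 σ2 q2 hσ2 hq2 w u2, symm_sum e1 e2 σ2 q2 hσ2 hq2 u1 u2]
    refine Finset.sum_congr rfl fun j _ => ?_
    by_cases h : Bd j
    · rw [hwb j h, hu1b j h]
    · rw [hu2i j h, dotProduct_zero, dotProduct_zero]
  rw [key, step2, ibp, ibp]
  simp only [sub_mulVec, dotProduct_sub, Finset.sum_sub_distrib]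
  ring
end

section
/- Well-posedness of the Dirichlet-to-Neumann map in the rank-deficient case: under the hypotheses of the semidefinite Dirichlet theorem (σ real symmetric ⪰ 0 with σ(e) ≠ 0 for all edges, or the commuting complex case), the map Λ_{σ,0} g := (L_σ u)_B is independent of the choice of Dirichlet solution u (solutions differ by floppy modes) and is given by Λ_{σ,0} = L_{BB} − L_{BI}(L_{II})^† L_{IB}, where † denotes the Moore–Penrose pseudoinverse; equivalently Λ_{σ,0} = L_{BB} − L_{BI} Q (Qᵀ L_{II} Q)^{-1} Qᵀ L_{IB} for any real matrix Q with QᵀQ = I and R(Q) = R(L_{II}). -/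
open Matrix

/-- Connectivity within a vertex set `S`. -/
def connWithin {V E : Type*} (e1 e2 : E → V) (S : Set V) : Prop :=
  ∀ i ∈ S, ∀ j ∈ S, Relation.ReflTransGen
    (fun a b => a ∈ S ∧ b ∈ S ∧ ∃ e, (e1 e = a ∧ e2 e = b) ∨ (e1 e = b ∧ e2 e = a)) i j

/-- The complex conductivity `σ = σ' + i σ''` built from its real and imaginary parts. -/
noncomputable def sigC {E : Type*} {d : ℕ} (σ' σ'' : E → Matrix (Fin d) (Fin d) ℝ) :
    E → Matrix (Fin d) (Fin d) ℂ :=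
  fun e => (σ' e).map (fun a => (a : ℂ)) + Complex.I • (σ'' e).map (fun a => (a : ℂ))

/-- The unit vector supported at vertex `q.1` in coordinate `q.2`. -/
def deltaVec {V : Type*} [DecidableEq V] {d : ℕ} (q : V × Fin d) : V → Fin d → ℂ :=
  fun v k => if v = q.1 ∧ k = q.2 then 1 else 0

/-- Block of the weighted-Laplacian matrix, with row indices in `P` and column
indices in `R` (subtypes of the vertex set). -/
noncomputable def lapBlock {V E : Type*} [Fintype E] [DecidableEq V] {d : ℕ}
    (e1 e2 : E → V) (σ : E → Matrix (Fin d) (Fin d) ℂ) (P R : V → Prop) :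
    Matrix ({v : V // P v} × Fin d) ({v : V // R v} × Fin d) ℂ :=
  fun p q => dlap e1 e2 σ (deltaVec (q.1.1, q.2)) p.1.1 p.2

/-!
Two Dirichlet solutions with the same boundary data differ by a solution `v` with zero boundary
data, and for such `v` the energy `∑ₑ (∇v)ₑ* σₑ (∇v)ₑ = ∑ᵢ vᵢ* (L v)ᵢ` vanishes. Its real part is
`∑ₑ (∇v)ₑ* σ'ₑ (∇v)ₑ ≥ 0`, so `σ'ₑ (∇v)ₑ = 0`, hence `σ''ₑ (∇v)ₑ = 0` and `L v = 0` everywhere: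
`v` is a floppy mode and does not change the boundary flux. The same argument applied to
`conj v` shows that `ker L_II` is closed under conjugation; since `L_II` is complex symmetric,
`ker L_II ∩ R(L_II) = 0`. Consequently `Qᵀ L_II Q` is invertible, `Q (Qᵀ L_II Q)⁻¹ Qᵀ` is a
generalized inverse of `L_II`, and eliminating the interior values yields the Schur complement,
since `L_BI` annihilates `ker L_II`.
-/

namespace Matrix

variable {K m n p κ : Type*} [Field K] [Fintype n] [Fintype κ] [DecidableEq κ]
  {A : Matrix n n K} {Q : Matrix n κ K}

lemma mulVec_eq_zero_of_transpose_mulVec_eq_zero (hQ : Qᵀ * Q = 1)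
    (hAQ : Set.range A.mulVec ⊆ Set.range Q.mulVec) {x : n → K} (hx : Qᵀ *ᵥ (A *ᵥ x) = 0) :
    A *ᵥ x = 0 := by
  obtain ⟨t, ht⟩ := hAQ ⟨x, rfl⟩
  have ht0 : t = 0 := by rw [← one_mulVec t, ← hQ, ← mulVec_mulVec, ht, hx]
  rw [← ht, ht0, mulVec_zero]

lemma isUnit_transpose_mul_mul (hQ : Qᵀ * Q = 1) (hAQ : Set.range A.mulVec = Set.range Q.mulVec)
    (hker : ∀ z, A *ᵥ z = 0 → z ∈ Set.range A.mulVec → z = 0) :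
    IsUnit (Qᵀ * A * Q) := by
  rw [isUnit_iff_isUnit_det, isUnit_iff_ne_zero, Ne, ← exists_mulVec_eq_zero_iff]
  rintro ⟨y, hy, hMy⟩
  have hAQy : A *ᵥ (Q *ᵥ y) = 0 :=
    mulVec_eq_zero_of_transpose_mulVec_eq_zero hQ hAQ.le (by rwa [mulVec_mulVec, mulVec_mulVec])
  have hQy : Q *ᵥ y = 0 := hker _ hAQy (hAQ ▸ ⟨y, rfl⟩)
  exact hy (by rw [← one_mulVec y, ← hQ, ← mulVec_mulVec, hQy, mulVec_zero])

/-- `Q (Qᵀ A Q)⁻¹ Qᵀ` is a generalized inverse of `A`. -/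
lemma mulVec_sub_mulVec_inv_mulVec_eq_zero (hQ : Qᵀ * Q = 1)
    (hAQ : Set.range A.mulVec ⊆ Set.range Q.mulVec) (hM : IsUnit (Qᵀ * A * Q)) (x : n → K) :
    A *ᵥ (x - Q *ᵥ ((Qᵀ * A * Q)⁻¹ *ᵥ (Qᵀ *ᵥ (A *ᵥ x)))) = 0 := by
  refine mulVec_eq_zero_of_transpose_mulVec_eq_zero hQ hAQ ?_
  have hcancel : ∀ z, Qᵀ *ᵥ (A *ᵥ (Q *ᵥ ((Qᵀ * A * Q)⁻¹ *ᵥ z))) = z := fun z => by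
    rw [mulVec_mulVec, mulVec_mulVec, mulVec_mulVec,
      mul_nonsing_inv _ ((isUnit_iff_isUnit_det _).mp hM), one_mulVec]
  rw [mulVec_sub, mulVec_sub, hcancel, sub_self]

lemma mulVec_add_mulVec_eq_schur_mulVec [Fintype p] {B : Matrix m p K} {C : Matrix m n K}
    {D : Matrix n p K} (hQ : Qᵀ * Q = 1) (hAQ : Set.range A.mulVec ⊆ Set.range Q.mulVec)
    (hM : IsUnit (Qᵀ * A * Q)) (hCA : ∀ w, A *ᵥ w = 0 → C *ᵥ w = 0) {g : p → K} {x : n → K}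
    (hx : D *ᵥ g + A *ᵥ x = 0) :
    B *ᵥ g + C *ᵥ x = (B - C * Q * (Qᵀ * A * Q)⁻¹ * Qᵀ * D) *ᵥ g := by
  have hCx := hCA _ (mulVec_sub_mulVec_inv_mulVec_eq_zero hQ hAQ hM x)
  rw [mulVec_sub, sub_eq_zero, eq_neg_of_add_eq_zero_right hx] at hCx
  rw [hCx, sub_mulVec, sub_eq_add_neg]
  simp only [mulVec_neg, mulVec_mulVec, Matrix.mul_assoc]

lemma eq_zero_of_mulVec_eq_zero_of_mem_range {R : Type*} [CommRing R] [PartialOrder R]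
    [StarRing R] [StarOrderedRing R] [NoZeroDivisors R] {A : Matrix n n R} (hA : Aᵀ = A)
    (hstar : ∀ w, A *ᵥ w = 0 → A *ᵥ star w = 0) {z : n → R} (hz : A *ᵥ z = 0)
    (hzA : z ∈ Set.range A.mulVec) : z = 0 := by
  obtain ⟨s, rfl⟩ := hzA
  rw [← dotProduct_star_self_eq_zero, dotProduct_mulVec, ← mulVec_transpose, hA, hstar _ hz,
    zero_dotProduct]

end Matrix

section Laplacian

variable {V E : Type*} [Fintype E] [DecidableEq V] {d : ℕ} {K : Type*} [Field K]
  (e1 e2 : E → V)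

noncomputable def dlapLin (σ : E → Matrix (Fin d) (Fin d) K) :
    (V → Fin d → K) →ₗ[K] (V → Fin d → K) where
  toFun := dlap e1 e2 σ
  map_add' u v := by
    ext i k
    simp [dlap, dgrad, add_sub_add_comm, mulVec_add, Finset.sum_add_distrib]
  map_smul' c u := by
    ext i k
    simp [dlap, dgrad, ← smul_sub, mulVec_smul, Finset.mul_sum, mul_left_comm]

lemma dlap_sub (σ : E → Matrix (Fin d) (Fin d) K) (u u' : V → Fin d → K) :
    dlap e1 e2 σ (u - u') = dlap e1 e2 σ u - dlap e1 e2 σ u' :=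
  map_sub (dlapLin e1 e2 σ) u u'

lemma sum_dotProduct_dlap [Fintype V] (σ : E → Matrix (Fin d) (Fin d) K) (x u : V → Fin d → K) :
    ∑ i, x i ⬝ᵥ dlap e1 e2 σ u i = ∑ e, dgrad e1 e2 x e ⬝ᵥ (σ e *ᵥ dgrad e1 e2 u e) := by
  simp only [dlap, dotProduct_sum, dotProduct_smul, smul_eq_mul, sub_mul, ite_mul, one_mul,
    zero_mul]
  rw [Finset.sum_comm]
  simp [Finset.sum_sub_distrib, dgrad, sub_dotProduct]

lemma dlap_eq_zero_of_mulVec_dgrad_eq_zero {σ : E → Matrix (Fin d) (Fin d) K}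
    {u : V → Fin d → K} (h : ∀ e, σ e *ᵥ dgrad e1 e2 u e = 0) : dlap e1 e2 σ u = 0 := by
  ext i
  simp [dlap, h]

def IsDirichletSolution (σ : E → Matrix (Fin d) (Fin d) K) (Bd : V → Prop)
    (g u : V → Fin d → K) : Prop :=
  (∀ i, Bd i → u i = g i) ∧ (∀ i, ¬ Bd i → dlap e1 e2 σ u i = 0)

lemma IsDirichletSolution.sub {σ : E → Matrix (Fin d) (Fin d) K} {Bd : V → Prop}
    {g u u' : V → Fin d → K} (hu : IsDirichletSolution e1 e2 σ Bd g u)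
    (hu' : IsDirichletSolution e1 e2 σ Bd g u') :
    IsDirichletSolution e1 e2 σ Bd 0 (u - u') := by
  refine ⟨fun i hi => ?_, fun i hi => ?_⟩
  · simp [hu.1 i hi, hu'.1 i hi]
  · rw [dlap_sub, Pi.sub_apply, hu.2 i hi, hu'.2 i hi, sub_self]

end Laplacian

lemma dgrad_star {V E K : Type*} {d : ℕ} [Field K] [StarRing K] (e1 e2 : E → V)
    (u : V → Fin d → K) (e : E) : dgrad e1 e2 (star u) e = star (dgrad e1 e2 u e) :=
  (star_sub _ _).symm

def extendByZero {V : Type*} {d : ℕ} (R : V → Prop) [DecidablePred R]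
    (w : {v // R v} × Fin d → ℂ) : V → Fin d → ℂ :=
  fun v k => if h : R v then w (⟨v, h⟩, k) else 0

lemma star_extendByZero {V : Type*} {d : ℕ} (R : V → Prop) [DecidablePred R]
    (w : {v // R v} × Fin d → ℂ) : star (extendByZero R w) = extendByZero R (star w) := by
  ext v k
  by_cases h : R v <;> simp [extendByZero, h]

section Blocks

variable {V E : Type*} [Fintype V] [Fintype E] [DecidableEq V] {d : ℕ} (e1 e2 : E → V)

lemma sum_deltaVec_dotProduct (q : V × Fin d) (f : V → Fin d → ℂ) :
    ∑ i, deltaVec q i ⬝ᵥ f i = f q.1 q.2 := by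
  simp [deltaVec, dotProduct, ite_and]

lemma sum_smul_deltaVec (u : V → Fin d → ℂ) : ∑ q : V × Fin d, u q.1 q.2 • deltaVec q = u := by
  ext v k
  simp [deltaVec, Fintype.sum_prod_type, Finset.sum_apply, ite_and]

lemma dlap_apply_eq_sum (σ : E → Matrix (Fin d) (Fin d) ℂ) (u : V → Fin d → ℂ) (i : V)
    (k : Fin d) :
    dlap e1 e2 σ u i k = ∑ q : V × Fin d, u q.1 q.2 * dlap e1 e2 σ (deltaVec q) i k := by
  conv_lhs => rw [← sum_smul_deltaVec u]
  change dlapLin e1 e2 σ _ i k = _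
  simp [map_sum, Finset.sum_apply, dlapLin]

lemma lapBlock_transpose {σ : E → Matrix (Fin d) (Fin d) ℂ} (hσ : ∀ e, (σ e)ᵀ = σ e)
    (P R : V → Prop) : (lapBlock e1 e2 σ P R)ᵀ = lapBlock e1 e2 σ R P := by
  ext p q
  simp only [transpose_apply, lapBlock]
  -- both entries are the energy pairing `∑ₑ (∇δ_p)ₑ ⬝ σₑ (∇δ_q)ₑ` of two unit vectors
  rw [← sum_deltaVec_dotProduct (q.1.1, q.2) (dlap e1 e2 σ _),
    ← sum_deltaVec_dotProduct (p.1.1, p.2) (dlap e1 e2 σ _), sum_dotProduct_dlap,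
    sum_dotProduct_dlap]
  refine Finset.sum_congr rfl fun e _ => ?_
  rw [dotProduct_mulVec, ← mulVec_transpose, hσ, dotProduct_comm]

lemma dlap_apply_eq_lapBlock_mulVec_add (σ : E → Matrix (Fin d) (Fin d) ℂ)
    (u : V → Fin d → ℂ) (B : V → Prop) [DecidablePred B] {P : V → Prop} (i : {v // P v})
    (k : Fin d) :
    dlap e1 e2 σ u i k = (lapBlock e1 e2 σ P B *ᵥ fun q => u q.1.1 q.2) (i, k) +
      (lapBlock e1 e2 σ P (fun v => ¬ B v) *ᵥ fun q => u q.1.1 q.2) (i, k) := by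
  rw [dlap_apply_eq_sum, Fintype.sum_prod_type, ← Fintype.sum_subtype_add_sum_subtype B]
  simp only [mulVec, dotProduct, lapBlock, Fintype.sum_prod_type, mul_comm]

lemma dlap_extendByZero_apply (σ : E → Matrix (Fin d) (Fin d) ℂ) (R : V → Prop)
    [DecidablePred R] (w : {v // R v} × Fin d → ℂ) {P : V → Prop} (i : {v // P v}) (k : Fin d) :
    dlap e1 e2 σ (extendByZero R w) i k = (lapBlock e1 e2 σ P R *ᵥ w) (i, k) := by
  rw [dlap_apply_eq_lapBlock_mulVec_add e1 e2 σ _ R]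
  have hR : (fun q : {v // R v} × Fin d => extendByZero R w q.1.1 q.2) = w := by
    ext q; simp [extendByZero, q.1.2]
  have hnR : (fun q : {v // ¬ R v} × Fin d => extendByZero R w q.1.1 q.2) = 0 := by
    ext q; simp [extendByZero, q.1.2]
  rw [hR, hnR, mulVec_zero, Pi.zero_apply, add_zero]

end Blocks

section Conductivity

open scoped ComplexOrder

variable {m n : Type*}

lemma Complex.ofReal_semiconj_star : Function.Semiconj (fun a : ℝ => (a : ℂ)) star star :=
  fun a => (Complex.conj_ofReal a).symm

lemma Matrix.IsSymm.isHermitian_map_ofReal {S : Matrix n n ℝ} (hS : S.IsSymm) :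
    (S.map (fun a => (a : ℂ))).IsHermitian :=
  (isHermitian_iff_isSymm.mpr hS).map _ Complex.ofReal_semiconj_star

lemma Matrix.PosSemidef.map_ofReal [Fintype n] {S : Matrix n n ℝ} (hS : S.PosSemidef) :
    (S.map (fun a => (a : ℂ))).PosSemidef := by
  classical
  obtain ⟨B, rfl⟩ : ∃ B : Matrix n n ℝ, S = Bᴴ * B := by
    open MatrixOrder in
    exact CStarAlgebra.nonneg_iff_eq_star_mul_self.mp hS.nonneg
  rw [show (fun a : ℝ => (a : ℂ)) = ⇑Complex.ofRealHom from rfl, Matrix.map_mul,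
    conjTranspose_map (⇑Complex.ofRealHom) Complex.ofReal_semiconj_star]
  exact posSemidef_conjTranspose_mul_self _

lemma Matrix.map_ofReal_mulVec_star [Fintype n] (S : Matrix m n ℝ) (x : n → ℂ) :
    S.map (fun a => (a : ℂ)) *ᵥ star x = star (S.map (fun a => (a : ℂ)) *ᵥ x) := by
  ext i
  simp [mulVec, dotProduct]

lemma Matrix.map_ofReal_mulVec_eq_zero_iff [Fintype n] (S : Matrix m n ℝ) (x : n → ℂ) :
    S.map (fun a => (a : ℂ)) *ᵥ x = 0 ↔
      S *ᵥ (fun j => (x j).re) = 0 ∧ S *ᵥ (fun j => (x j).im) = 0 := by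
  simp only [funext_iff, Complex.ext_iff, forall_and]
  simp [mulVec, dotProduct, Complex.re_sum, Complex.im_sum]

variable {E : Type*} {d : ℕ} {σ' σ'' : E → Matrix (Fin d) (Fin d) ℝ} {e : E}

lemma sigC_transpose (hσ' : (σ' e).IsSymm) (hσ'' : (σ'' e).IsSymm) :
    (sigC σ' σ'' e)ᵀ = sigC σ' σ'' e := by
  rw [sigC, transpose_add, transpose_smul, ← transpose_map, ← transpose_map, hσ'.eq, hσ''.eq]

lemma re_star_dotProduct_sigC_mulVec (hσ'' : (σ'' e).IsSymm) (x : Fin d → ℂ) :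
    (star x ⬝ᵥ sigC σ' σ'' e *ᵥ x).re = (star x ⬝ᵥ (σ' e).map (fun a => (a : ℂ)) *ᵥ x).re := by
  have him := hσ''.isHermitian_map_ofReal.im_star_dotProduct_mulVec_self x
  rw [RCLike.im_to_complex] at him
  rw [sigC, add_mulVec, smul_mulVec, dotProduct_add, dotProduct_smul, smul_eq_mul,
    Complex.add_re, Complex.I_mul_re, him, neg_zero, add_zero]

lemma sigC_mulVec_eq_zero (hnull : ∀ v, σ' e *ᵥ v = 0 → σ'' e *ᵥ v = 0)
    {x : Fin d → ℂ} (hx : (σ' e).map (fun a => (a : ℂ)) *ᵥ x = 0) : sigC σ' σ'' e *ᵥ x = 0 := by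
  have hx'' : (σ'' e).map (fun a => (a : ℂ)) *ᵥ x = 0 := by
    rw [map_ofReal_mulVec_eq_zero_iff] at hx ⊢
    exact ⟨hnull _ hx.1, hnull _ hx.2⟩
  rw [sigC, add_mulVec, smul_mulVec, hx, hx'', smul_zero, add_zero]

end Conductivity

section FloppyModes

open scoped ComplexOrder

variable {V E : Type*} [Fintype V] [Fintype E] [DecidableEq V] {d : ℕ} {e1 e2 : E → V}
  {σ' σ'' : E → Matrix (Fin d) (Fin d) ℝ} {Bd : V → Prop}

lemma IsDirichletSolution.map_ofReal_mulVec_dgrad_eq_zero (hσ' : ∀ e, (σ' e).PosSemidef)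
    (hσ'' : ∀ e, (σ'' e).IsSymm) {v : V → Fin d → ℂ}
    (hv : IsDirichletSolution e1 e2 (sigC σ' σ'') Bd 0 v) (e : E) :
    (σ' e).map (fun a => (a : ℂ)) *ᵥ dgrad e1 e2 v e = 0 := by
  set q : E → ℂ := fun e =>
    star (dgrad e1 e2 v e) ⬝ᵥ (σ' e).map (fun a => (a : ℂ)) *ᵥ dgrad e1 e2 v e
  have hq_nonneg : ∀ e, 0 ≤ q e := fun e => (hσ' e).map_ofReal.dotProduct_mulVec_nonneg _
  have henergy : ∑ e, (q e).re = 0 := by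
    simp_rw [q, ← re_star_dotProduct_sigC_mulVec (hσ'' _), ← Complex.re_sum, ← dgrad_star,
      ← sum_dotProduct_dlap]
    rw [Fintype.sum_eq_zero _ fun i => ?_, Complex.zero_re]
    by_cases hi : Bd i
    · simp [hv.1 i hi]
    · simp [hv.2 i hi]
  have hqe : q e = 0 := by
    have hre := (Finset.sum_eq_zero_iff_of_nonneg fun e _ =>
      (Complex.le_def.mp (hq_nonneg e)).1).mp henergy e (Finset.mem_univ e)
    exact Complex.ext hre (Complex.le_def.mp (hq_nonneg e)).2.symm
  exact ((hσ' e).map_ofReal.dotProduct_mulVec_zero_iff _).mp hqe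

lemma IsDirichletSolution.dlap_eq_zero (hσ' : ∀ e, (σ' e).PosSemidef)
    (hσ'' : ∀ e, (σ'' e).IsSymm) (hnull : ∀ e (v : Fin d → ℝ), σ' e *ᵥ v = 0 → σ'' e *ᵥ v = 0)
    {v : V → Fin d → ℂ} (hv : IsDirichletSolution e1 e2 (sigC σ' σ'') Bd 0 v) :
    dlap e1 e2 (sigC σ' σ'') v = 0 ∧ dlap e1 e2 (sigC σ' σ'') (star v) = 0 := by
  have h := hv.map_ofReal_mulVec_dgrad_eq_zero hσ' hσ''
  refine ⟨dlap_eq_zero_of_mulVec_dgrad_eq_zero e1 e2 fun e => sigC_mulVec_eq_zero (hnull e) (h e),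
    dlap_eq_zero_of_mulVec_dgrad_eq_zero e1 e2 fun e => sigC_mulVec_eq_zero (hnull e) ?_⟩
  rw [dgrad_star, map_ofReal_mulVec_star, h e, star_zero]

lemma lapBlock_mulVec_eq_zero_of_mulVec_eq_zero [DecidablePred Bd]
    (hσ' : ∀ e, (σ' e).PosSemidef) (hσ'' : ∀ e, (σ'' e).IsSymm)
    (hnull : ∀ e (v : Fin d → ℝ), σ' e *ᵥ v = 0 → σ'' e *ᵥ v = 0)
    {w : {v // ¬ Bd v} × Fin d → ℂ}
    (hw : lapBlock e1 e2 (sigC σ' σ'') (fun v => ¬ Bd v) (fun v => ¬ Bd v) *ᵥ w = 0) :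
    lapBlock e1 e2 (sigC σ' σ'') Bd (fun v => ¬ Bd v) *ᵥ w = 0 ∧
      lapBlock e1 e2 (sigC σ' σ'') (fun v => ¬ Bd v) (fun v => ¬ Bd v) *ᵥ star w = 0 := by
  have hv : IsDirichletSolution e1 e2 (sigC σ' σ'') Bd 0 (extendByZero (fun v => ¬ Bd v) w) := by
    refine ⟨fun i hi => ?_, fun i hi => ?_⟩
    · ext k
      simp [extendByZero, hi]
    · ext k
      exact (dlap_extendByZero_apply e1 e2 _ _ w ⟨i, hi⟩ k).trans (by rw [hw]; rfl)
  obtain ⟨hL, hLstar⟩ := hv.dlap_eq_zero hσ' hσ'' hnull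
  rw [star_extendByZero] at hLstar
  constructor <;> ext ⟨i, k⟩
  · rw [← dlap_extendByZero_apply, hL]; rfl
  · rw [← dlap_extendByZero_apply, hLstar]; rfl

lemma eq_zero_of_lapBlock_mulVec_eq_zero_of_mem_range [DecidablePred Bd]
    (hσ' : ∀ e, (σ' e).PosSemidef) (hσ'' : ∀ e, (σ'' e).IsSymm)
    (hnull : ∀ e (v : Fin d → ℝ), σ' e *ᵥ v = 0 → σ'' e *ᵥ v = 0)
    {z : {v // ¬ Bd v} × Fin d → ℂ}
    (hz : lapBlock e1 e2 (sigC σ' σ'') (fun v => ¬ Bd v) (fun v => ¬ Bd v) *ᵥ z = 0)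
    (hzA : z ∈ Set.range
      (lapBlock e1 e2 (sigC σ' σ'') (fun v => ¬ Bd v) (fun v => ¬ Bd v)).mulVec) : z = 0 :=
  eq_zero_of_mulVec_eq_zero_of_mem_range
    (lapBlock_transpose e1 e2
      (fun e => sigC_transpose (isHermitian_iff_isSymm.mp (hσ' e).isHermitian) (hσ'' e)) _ _)
    (fun _ hw => (lapBlock_mulVec_eq_zero_of_mulVec_eq_zero hσ' hσ'' hnull hw).2) hz hzA

end FloppyModes

theorem dtn_well_posed_rank_deficient_general {V E : Type*} [Fintype V] [Fintype E]
    [DecidableEq V] {d : ℕ} (e1 e2 : E → V)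
    (Bd : V → Prop) [DecidablePred Bd]
    (σ' σ'' : E → Matrix (Fin d) (Fin d) ℝ)
    (hσ' : ∀ e, (σ' e).PosSemidef) (hσ'' : ∀ e, (σ'' e).IsSymm)
    (hnull : ∀ e (v : Fin d → ℝ), σ' e *ᵥ v = 0 → σ'' e *ᵥ v = 0)
    {κ : Type*} [Fintype κ] [DecidableEq κ]
    (Q : Matrix ({v : V // ¬ Bd v} × Fin d) κ ℝ)
    (hQ1 : Qᵀ * Q = 1)
    (hQ2 : Set.range (fun y : κ → ℂ => Q.map (fun a => (a : ℂ)) *ᵥ y) =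
      Set.range (fun y : {v : V // ¬ Bd v} × Fin d → ℂ =>
        lapBlock e1 e2 (sigC σ' σ'') (fun v => ¬ Bd v) (fun v => ¬ Bd v) *ᵥ y)) :
    IsUnit ((Q.map (fun a => (a : ℂ)))ᵀ *
        lapBlock e1 e2 (sigC σ' σ'') (fun v => ¬ Bd v) (fun v => ¬ Bd v) *
        Q.map (fun a => (a : ℂ))) ∧
    (∀ (g u u' : V → Fin d → ℂ),
      ((∀ i, Bd i → u i = g i) ∧ (∀ i, ¬ Bd i → dlap e1 e2 (sigC σ' σ'') u i = 0)) →
      ((∀ i, Bd i → u' i = g i) ∧ (∀ i, ¬ Bd i → dlap e1 e2 (sigC σ' σ'') u' i = 0)) →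
      ∀ i, Bd i → dlap e1 e2 (sigC σ' σ'') u i = dlap e1 e2 (sigC σ' σ'') u' i) ∧
    (∀ (g u : V → Fin d → ℂ),
      ((∀ i, Bd i → u i = g i) ∧ (∀ i, ¬ Bd i → dlap e1 e2 (sigC σ' σ'') u i = 0)) →
      ∀ (j : {v : V // Bd v}) (k : Fin d),
        dlap e1 e2 (sigC σ' σ'') u j.1 k =
        ((lapBlock e1 e2 (sigC σ' σ'') Bd Bd -
            lapBlock e1 e2 (sigC σ' σ'') Bd (fun v => ¬ Bd v) *
              Q.map (fun a => (a : ℂ)) *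
              ((Q.map (fun a => (a : ℂ)))ᵀ *
                lapBlock e1 e2 (sigC σ' σ'') (fun v => ¬ Bd v) (fun v => ¬ Bd v) *
                Q.map (fun a => (a : ℂ)))⁻¹ *
              (Q.map (fun a => (a : ℂ)))ᵀ *
              lapBlock e1 e2 (sigC σ' σ'') (fun v => ¬ Bd v) Bd) *ᵥ
          (fun q => g q.1.1 q.2)) (j, k)) := by
  classical
  have hQc : (Q.map (fun a => (a : ℂ)))ᵀ * Q.map (fun a => (a : ℂ)) = 1 := by
    rw [← transpose_map, show (fun a : ℝ => (a : ℂ)) = ⇑Complex.ofRealHom from rfl,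
      ← Matrix.map_mul, hQ1, Matrix.map_one _ (map_zero _) (map_one _)]
  set A := lapBlock e1 e2 (sigC σ' σ'') (fun v => ¬ Bd v) (fun v => ¬ Bd v)
  have hM : IsUnit ((Q.map (fun a => (a : ℂ)))ᵀ * A * Q.map (fun a => (a : ℂ))) :=
    isUnit_transpose_mul_mul hQc hQ2.symm fun _ hz hzA =>
      eq_zero_of_lapBlock_mulVec_eq_zero_of_mem_range hσ' hσ'' hnull hz hzA
  refine ⟨hM, fun g u u' hu hu' i _ => ?_, fun g u hu j k => ?_⟩
  · have h := congrFun ((IsDirichletSolution.sub e1 e2 hu hu').dlap_eq_zero hσ' hσ'' hnull).1 i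
    rwa [dlap_sub, Pi.sub_apply, Pi.zero_apply, sub_eq_zero] at h
  · have hg : (fun q : {v // Bd v} × Fin d => u q.1.1 q.2) = fun q => g q.1.1 q.2 := by
      ext q
      rw [hu.1 _ q.1.2]
    have hinterior : lapBlock e1 e2 (sigC σ' σ'') (fun v => ¬ Bd v) Bd *ᵥ (fun q => g q.1.1 q.2) +
        A *ᵥ (fun q => u q.1.1 q.2) = 0 := by
      ext ⟨i, k⟩
      rw [← hg, Pi.add_apply, ← dlap_apply_eq_lapBlock_mulVec_add, hu.2 i i.2]
      rfl
    rw [dlap_apply_eq_lapBlock_mulVec_add e1 e2 _ u Bd j k, hg]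
    exact congrFun (mulVec_add_mulVec_eq_schur_mulVec hQc hQ2.symm.le hM
      (fun _ hw => (lapBlock_mulVec_eq_zero_of_mulVec_eq_zero hσ' hσ'' hnull hw).1)
      hinterior) (j, k)

/-- **well-posedness of the DtN map in the rank-deficient case.**
Under the hypotheses of the semidefinite Dirichlet theorem (`σ = σ' + iσ''` with
`σ'(e)` symmetric `⪰ 0`, `σ(e) ≠ 0`, `σ''(e)` symmetric commuting with `σ'(e)`,
`N(σ'(e)) ⊆ N(σ''(e))`, connected graph with connected interior), for any real `Q`
with `QᵀQ = I` and `R(Q) = R(L_{II})`: the matrix `Qᵀ L_{II} Q` is invertible, the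
boundary fluxes `(L_σ u)_B` are independent of the choice of Dirichlet solution `u`,
and `Λ_{σ,0} g = (L_{BB} − L_{BI} Q (Qᵀ L_{II} Q)⁻¹ Qᵀ L_{IB}) g`
(equivalently, `Λ_{σ,0} = L_{BB} − L_{BI} (L_{II})† L_{IB}`). -/
theorem dtn_well_posed_rank_deficient {V E : Type*} [Fintype V] [Fintype E]
    [DecidableEq V] {d : ℕ} (e1 e2 : E → V)
    (Bd : V → Prop) [DecidablePred Bd] (hBne : ∃ i, Bd i)
    (hconn : connWithin e1 e2 Set.univ)
    (hconnI : connWithin e1 e2 {v | ¬ Bd v})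
    (σ' σ'' : E → Matrix (Fin d) (Fin d) ℝ)
    (hσ' : ∀ e, (σ' e).PosSemidef) (hσ'' : ∀ e, (σ'' e).IsSymm)
    (hcomm : ∀ e, σ' e * σ'' e = σ'' e * σ' e)
    (hnull : ∀ e (v : Fin d → ℝ), σ' e *ᵥ v = 0 → σ'' e *ᵥ v = 0)
    (hnz : ∀ e, sigC σ' σ'' e ≠ 0)
    {κ : Type*} [Fintype κ] [DecidableEq κ]
    (Q : Matrix ({v : V // ¬ Bd v} × Fin d) κ ℝ)
    (hQ1 : Qᵀ * Q = 1)
    (hQ2 : Set.range (fun y : κ → ℂ => Q.map (fun a => (a : ℂ)) *ᵥ y) =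
      Set.range (fun y : {v : V // ¬ Bd v} × Fin d → ℂ =>
        lapBlock e1 e2 (sigC σ' σ'') (fun v => ¬ Bd v) (fun v => ¬ Bd v) *ᵥ y)) :
    IsUnit ((Q.map (fun a => (a : ℂ)))ᵀ *
        lapBlock e1 e2 (sigC σ' σ'') (fun v => ¬ Bd v) (fun v => ¬ Bd v) *
        Q.map (fun a => (a : ℂ))) ∧
    (∀ (g u u' : V → Fin d → ℂ),
      ((∀ i, Bd i → u i = g i) ∧ (∀ i, ¬ Bd i → dlap e1 e2 (sigC σ' σ'') u i = 0)) →
      ((∀ i, Bd i → u' i = g i) ∧ (∀ i, ¬ Bd i → dlap e1 e2 (sigC σ' σ'') u' i = 0)) →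
      ∀ i, Bd i → dlap e1 e2 (sigC σ' σ'') u i = dlap e1 e2 (sigC σ' σ'') u' i) ∧
    (∀ (g u : V → Fin d → ℂ),
      ((∀ i, Bd i → u i = g i) ∧ (∀ i, ¬ Bd i → dlap e1 e2 (sigC σ' σ'') u i = 0)) →
      ∀ (j : {v : V // Bd v}) (k : Fin d),
        dlap e1 e2 (sigC σ' σ'') u j.1 k =
        ((lapBlock e1 e2 (sigC σ' σ'') Bd Bd -
            lapBlock e1 e2 (sigC σ' σ'') Bd (fun v => ¬ Bd v) *
              Q.map (fun a => (a : ℂ)) *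
              ((Q.map (fun a => (a : ℂ)))ᵀ *
                lapBlock e1 e2 (sigC σ' σ'') (fun v => ¬ Bd v) (fun v => ¬ Bd v) *
                Q.map (fun a => (a : ℂ)))⁻¹ *
              (Q.map (fun a => (a : ℂ)))ᵀ *
              lapBlock e1 e2 (sigC σ' σ'') (fun v => ¬ Bd v) Bd) *ᵥ
          (fun q => g q.1.1 q.2)) (j, k)) :=
  dtn_well_posed_rank_deficient_general e1 e2 Bd σ' σ'' hσ' hσ'' hnull Q hQ1 hQ2
end

section
/- Finitely many degenerate step lengths: consider an abstract discrete inverse problem satisfying the boundary/interior identity fᵀ(Λ_{p₁}−Λ_{p₂})g = b(S_{p₂}g, S_{p₁}f)ᵀ(p₁−p₂) on an open convex R ⊂ ℂ^m, where all entries of S_p are rational functions of p. Let p ∈ R, δp ∈ ℂ^m with δp ≠ 0, and suppose the Jacobian of p ↦ Λ_p (represented by the product-of-solutions matrix W(p,p)ᵀ) is injective at p. Then there are at most finitely many real t with p + tδp ∈ R for which either (i) the Jacobian at p + tδp fails to be injective, or (ii) Λ_{p+tδp} = Λ_p. -/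
/-!
Along the line `q = p + z • δp`, both kinds of degenerate step are zeros of one function
`g q = det (m columns of W(q,q)) * (W(p,q)ᵀ δp)_{ij}`: if `W(q,q)ᵀ` is not injective the minor
vanishes, and since the boundary/interior identity gives `Λ_q − Λ_p = z W(p,q)ᵀ δp`, `Λ_q = Λ_p`
with `z ≠ 0` kills the second factor. Injectivity of `W(p,p)ᵀ` and `δp ≠ 0` let us choose the
columns and the index `ij` so that `g p ≠ 0`. By bilinearity of `b`, `g` is rational on `R`, and a
rational function that is nonzero at `z = 0` has only finitely many zeros on the line.
-/

open Matrix

/-- The product-of-solutions matrix `W(p₁,p₂) ∈ ℂ^{m × n²}`, with columns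
`W(p₁,p₂)(:, (i,j)) = b(S_{p₁}(:,i), S_{p₂}(:,j))`. -/
def Wmat {m n ℓ : ℕ} (S : (Fin m → ℂ) → Matrix (Fin ℓ) (Fin n) ℂ)
    (b : (Fin ℓ → ℂ) → (Fin ℓ → ℂ) → (Fin m → ℂ))
    (p₁ p₂ : Fin m → ℂ) : Matrix (Fin m) (Fin n × Fin n) ℂ :=
  fun k ij => b (fun a => S p₁ a ij.1) (fun a => S p₂ a ij.2) k

section RationalFunctions

variable {K σ : Type*} [Field K]

def rationalFunctionsOn (U : Set (σ → K)) : Subalgebra K ((σ → K) → K) where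
  carrier := {g | ∃ P Q : MvPolynomial σ K, ∀ x ∈ U,
    MvPolynomial.eval x Q ≠ 0 ∧ g x = MvPolynomial.eval x P / MvPolynomial.eval x Q}
  mul_mem' := by
    rintro f g ⟨P, Q, hPQ⟩ ⟨P', Q', hPQ'⟩
    refine ⟨P * P', Q * Q', fun x hx => ?_⟩
    obtain ⟨hQ, hf⟩ := hPQ x hx
    obtain ⟨hQ', hg⟩ := hPQ' x hx
    simp only [map_mul, Pi.mul_apply, hf, hg]
    exact ⟨mul_ne_zero hQ hQ', div_mul_div_comm _ _ _ _⟩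
  add_mem' := by
    rintro f g ⟨P, Q, hPQ⟩ ⟨P', Q', hPQ'⟩
    refine ⟨P * Q' + Q * P', Q * Q', fun x hx => ?_⟩
    obtain ⟨hQ, hf⟩ := hPQ x hx
    obtain ⟨hQ', hg⟩ := hPQ' x hx
    simp only [map_add, map_mul, Pi.add_apply, hf, hg]
    exact ⟨mul_ne_zero hQ hQ', div_add_div _ _ hQ hQ'⟩
  algebraMap_mem' c := ⟨MvPolynomial.C c, 1, fun x _ => by simp⟩

noncomputable def MvPolynomial.restrictLine (p v : σ → K) : MvPolynomial σ K →ₐ[K] Polynomial K :=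
  MvPolynomial.aeval fun k => Polynomial.C (p k) + Polynomial.C (v k) * Polynomial.X

theorem MvPolynomial.eval_restrictLine (P : MvPolynomial σ K) (p v : σ → K) (t : K) :
    (MvPolynomial.restrictLine p v P).eval t = MvPolynomial.eval (p + t • v) P := by
  rw [← Polynomial.coe_aeval_eq_eval, MvPolynomial.restrictLine, MvPolynomial.comp_aeval_apply,
    MvPolynomial.aeval_eq_eval]
  congr 2
  funext k
  simp only [Polynomial.aeval_add, Polynomial.aeval_mul, Polynomial.aeval_C, Polynomial.aeval_X,
    Pi.add_apply, Pi.smul_apply, smul_eq_mul, Algebra.algebraMap_self, RingHom.id_apply, mul_comm]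

theorem rationalFunctionsOn.finite_setOf_line_zero {U : Set (σ → K)} {g : (σ → K) → K}
    (hg : g ∈ rationalFunctionsOn U) {p : σ → K} (hp : p ∈ U) (hgp : g p ≠ 0) (v : σ → K) :
    {t : K | p + t • v ∈ U ∧ g (p + t • v) = 0}.Finite := by
  obtain ⟨P, Q, hPQ⟩ := hg
  have hP (t : K) := MvPolynomial.eval_restrictLine P p v t
  have hP0 : MvPolynomial.restrictLine p v P ≠ 0 := by
    intro h
    apply hgp
    rw [(hPQ p hp).2, ← add_zero p, ← zero_smul K v, ← hP, h, Polynomial.eval_zero, zero_div]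
  refine (Polynomial.finite_setOfPred_isRoot hP0).subset ?_
  rintro t ⟨ht, hgt⟩
  obtain ⟨hQ, hgt'⟩ := hPQ _ ht
  rw [hgt', div_eq_zero_iff] at hgt
  simpa [Polynomial.IsRoot, hP] using hgt.resolve_right hQ

end RationalFunctions

section FunctionSubalgebra

variable {R X : Type*} [CommRing R] (A : Subalgebra R (X → R))

theorem Subalgebra.det_mem_of_forall_mem {n : Type*} [Fintype n] [DecidableEq n]
    {M : X → Matrix n n R} (hM : ∀ i j, (fun x => M x i j) ∈ A) :
    (fun x => (M x).det) ∈ A := by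
  let N : Matrix n n A := of fun i j => ⟨_, hM i j⟩
  convert N.det.2 using 1
  funext x
  let φ : A →+* R := (Pi.evalRingHom (fun _ => R) x).comp A.val.toRingHom
  exact (congrArg det (by ext; rfl : M x = φ.mapMatrix N)).trans (φ.map_det N).symm

theorem Subalgebra.mulVec_apply_mem {m n : Type*} [Fintype n] {M : X → Matrix m n R}
    (hM : ∀ i j, (fun x => M x i j) ∈ A) (v : n → R) (i : m) :
    (fun x => (M x *ᵥ v) i) ∈ A := by
  have h : (fun x => (M x *ᵥ v) i) =
      ∑ j, (fun x => M x i j) * algebraMap R (X → R) (v j) := by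
    funext x
    simp [mulVec, dotProduct]
  rw [h]
  exact sum_mem fun j _ => mul_mem (hM i j) (A.algebraMap_mem _)

theorem apply_eq_sum_of_isLinearMap₂ {ι M : Type*} [Fintype ι] [DecidableEq ι] [AddCommMonoid M]
    [Module R M]
    (b : (ι → R) → (ι → R) → M) (hb1 : ∀ y, IsLinearMap R fun x => b x y)
    (hb2 : ∀ x, IsLinearMap R fun y => b x y) (x y : ι → R) :
    b x y = ∑ a, ∑ c, (x a * y c) •
      b (fun j => if a = j then 1 else 0) (fun j => if c = j then 1 else 0) := by
  have hx := (IsLinearMap.mk' _ (hb1 y)).pi_apply_eq_sum_univ x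
  simp only [IsLinearMap.mk'_apply] at hx
  rw [hx]
  refine Finset.sum_congr rfl fun a _ => ?_
  have hy := (IsLinearMap.mk' _ (hb2 fun j => if a = j then 1 else 0)).pi_apply_eq_sum_univ y
  simp only [IsLinearMap.mk'_apply] at hy
  simp only [hy, Finset.smul_sum, smul_smul]

theorem Subalgebra.isLinearMap₂_apply_mem {ι κ : Type*} [Fintype ι]
    {b : (ι → R) → (ι → R) → (κ → R)} (hb1 : ∀ y, IsLinearMap R fun x => b x y)
    (hb2 : ∀ x, IsLinearMap R fun y => b x y) {x y : X → ι → R}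
    (hx : ∀ a, (fun q => x q a) ∈ A) (hy : ∀ c, (fun q => y q c) ∈ A) (k : κ) :
    (fun q => b (x q) (y q) k) ∈ A := by
  classical
  have h : (fun q => b (x q) (y q) k) = ∑ a, ∑ c, (fun q => x q a) * (fun q => y q c) *
      algebraMap R (X → R)
        (b (fun j => if a = j then 1 else 0) (fun j => if c = j then 1 else 0) k) := by
    funext q
    rw [apply_eq_sum_of_isLinearMap₂ b hb1 hb2]
    simp
  rw [h]
  exact sum_mem fun a _ => sum_mem fun c _ =>
    mul_mem (mul_mem (hx a) (hy c)) (A.algebraMap_mem _)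

end FunctionSubalgebra

section Minors

variable {K m ι : Type*} [Field K] [Fintype m] [DecidableEq m]

theorem Matrix.exists_det_submatrix_ne_zero_of_injective [Fintype ι] {A : Matrix m ι K}
    (h : Function.Injective fun x => Aᵀ *ᵥ x) :
    ∃ s : m → ι, (A.submatrix id s).det ≠ 0 := by
  have hrows : LinearIndependent K A.row := by
    rw [← vecMul_injective_iff]
    simpa only [mulVec_transpose] using h
  obtain ⟨κ, a, ha, hspan, hli⟩ := exists_linearIndependent' K A.col
  have : Fintype κ := Fintype.ofInjective a ha
  have hcard : Fintype.card m = Fintype.card κ := by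
    rw [← finrank_span_eq_card hli, hspan, ← rank_eq_finrank_span_cols, hrows.rank_matrix]
  let e : m ≃ κ := Fintype.equivOfCardEq hcard
  have hcols : LinearIndependent K (A.submatrix id (a ∘ e)).col := hli.comp e e.injective
  exact ⟨a ∘ e,
    ((isUnit_iff_isUnit_det _).mp (linearIndependent_cols_iff_isUnit.mp hcols)).ne_zero⟩

theorem Matrix.injective_mulVec_transpose_of_det_submatrix_ne_zero {A : Matrix m ι K}
    {s : m → ι} (hs : (A.submatrix id s).det ≠ 0) :
    Function.Injective fun x => Aᵀ *ᵥ x := by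
  have hsub : Function.Injective (A.submatrix id s).vecMul :=
    vecMul_injective_iff_isUnit.mpr ((isUnit_iff_isUnit_det _).mpr (Ne.isUnit hs))
  intro x y hxy
  refine hsub (funext fun l => ?_)
  have hl : (x ᵥ* A) (s l) = (y ᵥ* A) (s l) := by
    simpa only [mulVec_transpose] using congrFun hxy (s l)
  exact hl

end Minors

theorem Λ_sub_apply_eq_Wmat_mulVec {m n ℓ : ℕ} {R : Set (Fin m → ℂ)}
    {Λ : (Fin m → ℂ) → Matrix (Fin n) (Fin n) ℂ}
    {S : (Fin m → ℂ) → Matrix (Fin ℓ) (Fin n) ℂ}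
    {b : (Fin ℓ → ℂ) → (Fin ℓ → ℂ) → (Fin m → ℂ)}
    (hid : ∀ (f g : Fin n → ℂ), ∀ p₁ ∈ R, ∀ p₂ ∈ R,
      f ⬝ᵥ ((Λ p₁ - Λ p₂) *ᵥ g) = b (S p₂ *ᵥ g) (S p₁ *ᵥ f) ⬝ᵥ (p₁ - p₂))
    {p₁ p₂ : Fin m → ℂ} (hp₁ : p₁ ∈ R) (hp₂ : p₂ ∈ R) (i j : Fin n) :
    (Λ p₁ - Λ p₂) j i = ((Wmat S b p₂ p₁)ᵀ *ᵥ (p₁ - p₂)) (i, j) := by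
  have h := hid (Pi.single j 1) (Pi.single i 1) p₁ hp₁ p₂ hp₂
  rw [mulVec_single_one, single_one_dotProduct, mulVec_single_one, mulVec_single_one] at h
  exact h

theorem finitely_many_degenerate_steps_general {m n ℓ : ℕ}
    (R : Set (Fin m → ℂ))
    (Λ : (Fin m → ℂ) → Matrix (Fin n) (Fin n) ℂ)
    (S : (Fin m → ℂ) → Matrix (Fin ℓ) (Fin n) ℂ)
    (b : (Fin ℓ → ℂ) → (Fin ℓ → ℂ) → (Fin m → ℂ))
    (hb1 : ∀ y, IsLinearMap ℂ fun x => b x y)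
    (hb2 : ∀ x, IsLinearMap ℂ fun y => b x y)
    (hid : ∀ (f g : Fin n → ℂ), ∀ p₁ ∈ R, ∀ p₂ ∈ R,
      f ⬝ᵥ ((Λ p₁ - Λ p₂) *ᵥ g) = b (S p₂ *ᵥ g) (S p₁ *ᵥ f) ⬝ᵥ (p₁ - p₂))
    (hrat : ∀ (i : Fin ℓ) (j : Fin n), ∃ P Q : MvPolynomial (Fin m) ℂ,
      ∀ p ∈ R, MvPolynomial.eval p Q ≠ 0 ∧
        S p i j = MvPolynomial.eval p P / MvPolynomial.eval p Q)
    (p : Fin m → ℂ) (hp : p ∈ R) (δp : Fin m → ℂ) (hδp : δp ≠ 0)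
    (hinj : Function.Injective fun x : Fin m → ℂ => (Wmat S b p p)ᵀ *ᵥ x) :
    {t : ℝ | p + (t : ℂ) • δp ∈ R ∧
        (¬ Function.Injective (fun x : Fin m → ℂ =>
            (Wmat S b (p + (t : ℂ) • δp) (p + (t : ℂ) • δp))ᵀ *ᵥ x) ∨
          Λ (p + (t : ℂ) • δp) = Λ p)}.Finite := by
  set A := rationalFunctionsOn R
  have hS : ∀ a i, (fun q => S q a i) ∈ A := hrat
  have hconst : ∀ a i, (fun _ : Fin m → ℂ => S p a i) ∈ A := fun a i => A.algebraMap_mem _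
  obtain ⟨s, hs⟩ := exists_det_submatrix_ne_zero_of_injective hinj
  have hWδ : (Wmat S b p p)ᵀ *ᵥ δp ≠ 0 := by simpa using hinj.ne hδp
  obtain ⟨ij, hij⟩ := Function.ne_iff.mp hWδ
  let g : (Fin m → ℂ) → ℂ := fun q =>
    ((Wmat S b q q).submatrix id s).det * ((Wmat S b p q)ᵀ *ᵥ δp) ij
  have hg : g ∈ A := mul_mem
    (A.det_mem_of_forall_mem fun k l => A.isLinearMap₂_apply_mem hb1 hb2 (hS · _) (hS · _) k)
    (A.mulVec_apply_mem
      (fun k l => A.isLinearMap₂_apply_mem hb1 hb2 (hconst · _) (hS · _) l) δp ij)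
  refine (((rationalFunctionsOn.finite_setOf_line_zero hg hp (mul_ne_zero hs hij) δp).preimage
    Complex.ofReal_injective.injOn).insert 0).subset ?_
  rintro t ⟨htR, hdeg⟩
  rcases eq_or_ne t 0 with rfl | ht
  · exact Set.mem_insert _ _
  refine Or.inr ⟨htR, mul_eq_zero.mpr ?_⟩
  rcases hdeg with hni | hΛ
  · exact .inl (not_ne_iff.mp fun h => hni (injective_mulVec_transpose_of_det_submatrix_ne_zero h))
  · have h := Λ_sub_apply_eq_Wmat_mulVec hid htR hp ij.1 ij.2
    rw [hΛ, sub_self, add_sub_cancel_left, mulVec_smul, Pi.smul_apply, smul_eq_mul] at h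
    exact .inr ((mul_eq_zero.mp h.symm).resolve_left (Complex.ofReal_ne_zero.mpr ht))

/-- **finitely many degenerate step lengths.** For an abstract discrete
inverse problem satisfying the boundary/interior identity on an open convex `R`,
with all entries of `S_p` rational functions of `p`: if the Jacobian `W(p,p)ᵀ` is
injective at some `p ∈ R` and `δp ≠ 0`, then there are at most finitely many real `t`
with `p + tδp ∈ R` such that either the Jacobian at `p + tδp` is not injective or
`Λ_{p+tδp} = Λ_p`. -/
theorem finitely_many_degenerate_steps {m n ℓ : ℕ}
    (R : Set (Fin m → ℂ)) (hRopen : IsOpen R) (hRconv : Convex ℝ R)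
    (Λ : (Fin m → ℂ) → Matrix (Fin n) (Fin n) ℂ)
    (S : (Fin m → ℂ) → Matrix (Fin ℓ) (Fin n) ℂ)
    (b : (Fin ℓ → ℂ) → (Fin ℓ → ℂ) → (Fin m → ℂ))
    (hb1 : ∀ y, IsLinearMap ℂ fun x => b x y)
    (hb2 : ∀ x, IsLinearMap ℂ fun y => b x y)
    (hid : ∀ (f g : Fin n → ℂ), ∀ p₁ ∈ R, ∀ p₂ ∈ R,
      f ⬝ᵥ ((Λ p₁ - Λ p₂) *ᵥ g) = b (S p₂ *ᵥ g) (S p₁ *ᵥ f) ⬝ᵥ (p₁ - p₂))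
    (hrat : ∀ (i : Fin ℓ) (j : Fin n), ∃ P Q : MvPolynomial (Fin m) ℂ,
      ∀ p ∈ R, MvPolynomial.eval p Q ≠ 0 ∧
        S p i j = MvPolynomial.eval p P / MvPolynomial.eval p Q)
    (p : Fin m → ℂ) (hp : p ∈ R) (δp : Fin m → ℂ) (hδp : δp ≠ 0)
    (hinj : Function.Injective fun x : Fin m → ℂ => (Wmat S b p p)ᵀ *ᵥ x) :
    {t : ℝ | p + (t : ℂ) • δp ∈ R ∧
        (¬ Function.Injective (fun x : Fin m → ℂ =>
            (Wmat S b (p + (t : ℂ) • δp) (p + (t : ℂ) • δp))ᵀ *ᵥ x) ∨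
          Λ (p + (t : ℂ) • δp) = Λ p)}.Finite :=
  finitely_many_degenerate_steps_general R Λ S b hb1 hb2 hid hrat p hp δp hδp hinj
end

section
/- Scalar-to-matrix Jacobian injectivity transfer: let G = (V,E) be a graph with boundary and s : E → (0,∞) a scalar conductivity, and define the matrix conductivity σ(e) = s(e)·I_d ∈ ℝ^{d×d}. If the Jacobian of the scalar conductivity-to-DtN map is injective at s (equivalently, the products ∇v_i ∘ ∇v_{i'} of gradients of fundamental Dirichlet solutions span ℝ^{|E|}), then the Jacobian of the matrix-valued conductivity-to-DtN map is injective at σ (equivalently, the vectorized blockwise outer products vect((∇u) ⊙ (∇u')) over all pairs of fundamental matrix Dirichlet solutions span ℝ^{d²|E|}). -/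
/-! Expanding a matrix field entrywise in the matrix units `E_{aa'}` reduces spanning
`E → ℝ^{d×d}` to spanning `E → ℝ`, one coefficient function at a time. For `σ = s·I` the
fundamental matrix solutions are `v_j ⊗ e_a`, so the outer products of their gradients are
the scalar products `∇v_j ∘ ∇v_{j'}` times matrix units. -/

open Matrix

/-- The scalar discrete gradient. -/
def sgrad {V E : Type*} (e1 e2 : E → V) (u : V → ℝ) : E → ℝ :=
  fun e => u (e1 e) - u (e2 e)

/-- The scalar weighted graph Laplacian applied to `u`. -/
noncomputable def slap {V E : Type*} [Fintype E] [DecidableEq V]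
    (e1 e2 : E → V) (s : E → ℝ) (u : V → ℝ) : V → ℝ :=
  fun i => ∑ e, ((if e1 e = i then (1 : ℝ) else 0) - (if e2 e = i then 1 else 0)) *
    (s e * sgrad e1 e2 u e)

open Submodule Set in
theorem Submodule.span_pointwise_smul_eq_top {R N ι κ : Type*} [Semiring R]
    [AddCommMonoid N] [Module R N] [Fintype κ] {S : Set (ι → R)} (hS : span R S = ⊤)
    {b : κ → N} (hb : span R (range b) = ⊤) :
    span R {w : ι → N | ∃ f ∈ S, ∃ k, w = fun e => f e • b k} = ⊤ := by
  refine eq_top_iff.2 fun g _ => ?_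
  choose c hc using fun e => (mem_span_range_iff_exists_fun R).1 (hb ▸ mem_top : g e ∈ _)
  have hg : g = ∑ k, fun e => c e k • b k := by
    funext e
    simp only [Finset.sum_apply, hc]
  rw [hg]
  refine sum_mem fun k _ => ?_
  let L : (ι → R) →ₗ[R] ι → N := LinearMap.pi fun e => (LinearMap.proj e).smulRight (b k)
  have hL : L '' S ⊆ {w : ι → N | ∃ f ∈ S, ∃ k, w = fun e => f e • b k} := by
    rintro _ ⟨f, hf, rfl⟩
    exact ⟨f, hf, k, rfl⟩
  have hck : L (fun e => c e k) ∈ span R (L '' S) := by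
    rw [← map_span, hS]
    exact mem_map_of_mem mem_top
  exact span_mono hL hck

theorem Matrix.span_range_single_one_eq_top {m n R : Type*} [Fintype m] [Fintype n]
    [DecidableEq m] [DecidableEq n] [CommSemiring R] :
    Submodule.span R (Set.range fun p : m × n => single p.1 p.2 (1 : R)) = ⊤ := by
  convert (stdBasis R m n).span_eq
  exact (stdBasis_eq_single ..).symm

theorem Matrix.smul_single_one_eq_mul_ite {m n R : Type*} [DecidableEq m] [DecidableEq n]
    [MulZeroOneClass R] (c : R) (a : m) (a' : n) :
    c • single a a' (1 : R) = fun k l => c * if k = a ∧ l = a' then 1 else 0 := by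
  ext k l
  simp [single_apply, eq_comm]

theorem scalar_to_matrix_jacobian_transfer_general {V E : Type*} {d : ℕ} (e1 e2 : E → V)
    (Bd : V → Prop)
    (v : {x : V // Bd x} → V → ℝ)
    (hspan : Submodule.span ℝ
        {w : E → ℝ | ∃ j j' : {x : V // Bd x},
          w = fun e => sgrad e1 e2 (v j) e * sgrad e1 e2 (v j') e} = ⊤) :
    Submodule.span ℝ
        {w : E → Matrix (Fin d) (Fin d) ℝ |
          ∃ (j j' : {x : V // Bd x}) (a a' : Fin d),
            w = fun e => fun k l =>
              sgrad e1 e2 (v j) e * sgrad e1 e2 (v j') e *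
                (if k = a ∧ l = a' then 1 else 0)} = ⊤ := by
  rw [← Submodule.span_pointwise_smul_eq_top hspan
    (span_range_single_one_eq_top (m := Fin d) (n := Fin d))]
  congr 1 with w
  constructor
  · rintro ⟨j, j', a, a', rfl⟩
    exact ⟨_, ⟨j, j', rfl⟩, (a, a'),
      funext fun _ => (smul_single_one_eq_mul_ite ..).symm⟩
  · rintro ⟨_, ⟨j, j', rfl⟩, ⟨a, a'⟩, rfl⟩
    exact ⟨j, j', a, a', funext fun _ => smul_single_one_eq_mul_ite ..⟩

/-- **scalar-to-matrix Jacobian injectivity transfer.** Let `s` be a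
positive scalar conductivity, `v j` the fundamental scalar Dirichlet solutions (with
boundary data the canonical basis vectors indexed by boundary nodes `j`).  If the
Hadamard products of gradients of the `v j` span `ℝ^{|E|}` (injectivity of the scalar
Jacobian), then for the matrix conductivity `σ(e) = s(e)·I_d` the vectorized blockwise
outer products of gradients of the fundamental matrix solutions `v j ⊗ e_a` span
`ℝ^{d²|E|}` (injectivity of the matrix Jacobian). -/
theorem scalar_to_matrix_jacobian_transfer {V E : Type*} [Fintype V] [Fintype E]
    [DecidableEq V] {d : ℕ} (e1 e2 : E → V)
    (Bd : V → Prop) [DecidablePred Bd]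
    (s : E → ℝ) (hs : ∀ e, 0 < s e)
    (v : {x : V // Bd x} → V → ℝ)
    (hvb : ∀ j : {x : V // Bd x}, ∀ i, Bd i → v j i = if i = j.1 then 1 else 0)
    (hvi : ∀ j : {x : V // Bd x}, ∀ i, ¬ Bd i → slap e1 e2 s (v j) i = 0)
    (hspan : Submodule.span ℝ
        {w : E → ℝ | ∃ j j' : {x : V // Bd x},
          w = fun e => sgrad e1 e2 (v j) e * sgrad e1 e2 (v j') e} = ⊤) :
    Submodule.span ℝ
        {w : E → Matrix (Fin d) (Fin d) ℝ |
          ∃ (j j' : {x : V // Bd x}) (a a' : Fin d),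
            w = fun e => fun k l =>
              sgrad e1 e2 (v j) e * sgrad e1 e2 (v j') e *
                (if k = a ∧ l = a' then 1 else 0)} = ⊤ :=
  scalar_to_matrix_jacobian_transfer_general e1 e2 Bd v hspan
end

section
/- Invertibility for damped elastodynamic networks: let K = L_σ and C = diag(q_damp) + L_μ and consider the frequency-domain operator at frequency ω ≠ 0, restricted to the interior: A = (L_μ)_{II} + diag((q_damp)_I) + (iω)^{-1}(L_σ)_{II} + iω diag((q_mass)_I), where σ, μ are real symmetric positive semidefinite edge weights, q_mass(i) = m(i)I with m(i) > 0, and q_damp(i) = c_V(i)I with c_V(i) > 0 for all interior i. Then A is invertible, so the frequency-domain Dirichlet problem for the elastodynamic network has a unique solution for any boundary displacement. -/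
open Matrix

/-- The frequency-domain elastodynamic operator
`A u = (L_μ + diag(c_V) + (iω)⁻¹ L_σ + iω diag(m)) u`. -/
noncomputable def elastOp {V E : Type*} [Fintype E] [DecidableEq V] {d : ℕ}
    (e1 e2 : E → V) (σ μ : E → Matrix (Fin d) (Fin d) ℝ)
    (m cV : V → ℝ) (ω : ℝ) (u : V → Fin d → ℂ) : V → Fin d → ℂ :=
  fun i => dlap e1 e2 (fun e => (μ e).map (fun a => (a : ℂ))) u i +
    (cV i : ℂ) • u i +
    (Complex.I * ω)⁻¹ • dlap e1 e2 (fun e => (σ e).map (fun a => (a : ℂ))) u i +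
    (Complex.I * ω) • ((m i : ℂ) • u i)

/-! Pair `A z = 0` with `z`: summing by parts, `⟨z, L_M z⟩ = ⟨∇z, diag(M) ∇z⟩`, which is real and
nonnegative for real positive semidefinite weights. Hence the stiffness term `(iω)⁻¹ ⟨z, L_σ z⟩` and
the mass term `iω Σ mᵢ |zᵢ|²` are purely imaginary, and taking real parts leaves
`0 = ⟨∇z, μ ∇z⟩ + Σ cᵢ |zᵢ|² ≥ Σ cᵢ |zᵢ|²`, so `z` vanishes in the interior. Uniqueness for the
Dirichlet problem is this injectivity; existence follows by finite dimensionality. -/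

open scoped ComplexOrder

theorem Matrix.PosSemidef.map_ofReal_s19 {n : Type*} [Fintype n] {M : Matrix n n ℝ}
    (hM : M.PosSemidef) : (M.map ((↑) : ℝ → ℂ)).PosSemidef := by
  classical
  open scoped MatrixOrder in
  obtain ⟨B, rfl⟩ := CStarAlgebra.nonneg_iff_eq_star_mul_self.mp hM.nonneg
  rw [star_eq_conjTranspose, show ((↑) : ℝ → ℂ) = Complex.ofRealHom from rfl, Matrix.map_mul,
    conjTranspose_map (⇑Complex.ofRealHom) fun _ => (Complex.conj_ofReal _).symm]
  exact posSemidef_conjTranspose_mul_self _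

section Laplacian

variable {V E : Type*} {d : ℕ} {K : Type*} [Field K] (e1 e2 : E → V)

theorem dgrad_add (u v : V → Fin d → K) :
    dgrad e1 e2 (u + v) = dgrad e1 e2 u + dgrad e1 e2 v := by
  funext e
  simp only [dgrad, Pi.add_apply]
  abel

theorem dgrad_smul (c : K) (u : V → Fin d → K) :
    dgrad e1 e2 (c • u) = c • dgrad e1 e2 u := by
  funext e
  simp only [dgrad, Pi.smul_apply, smul_sub]

variable [Fintype E] [DecidableEq V] (M : E → Matrix (Fin d) (Fin d) K)

theorem dlap_add (u v : V → Fin d → K) :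
    dlap e1 e2 M (u + v) = dlap e1 e2 M u + dlap e1 e2 M v := by
  funext i
  simp only [dlap, dgrad_add, Pi.add_apply, mulVec_add, smul_add, Finset.sum_add_distrib]

theorem dlap_smul (c : K) (u : V → Fin d → K) :
    dlap e1 e2 M (c • u) = c • dlap e1 e2 M u := by
  funext i
  simp only [dlap, dgrad_smul, Pi.smul_apply, mulVec_smul, Finset.smul_sum]
  exact Finset.sum_congr rfl fun e _ => smul_comm _ _ _

theorem sum_star_dotProduct_dlap [Fintype V] [StarRing K] (u : V → Fin d → K) :
    ∑ i, star (u i) ⬝ᵥ dlap e1 e2 M u i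
      = ∑ e, star (dgrad e1 e2 u e) ⬝ᵥ (M e *ᵥ dgrad e1 e2 u e) := by
  simp only [dlap, dotProduct_sum]
  rw [Finset.sum_comm]
  refine Finset.sum_congr rfl fun e _ => ?_
  simp only [dotProduct_smul, smul_eq_mul, sub_mul, one_mul, zero_mul, ite_mul,
    Finset.sum_sub_distrib, Finset.sum_ite_eq, Finset.mem_univ, if_true, ← sub_dotProduct,
    dgrad, star_sub]

end Laplacian

section ElasticOperator

variable {V E : Type*} [Fintype E] [DecidableEq V] {d : ℕ} (e1 e2 : E → V)
  (σ μ : E → Matrix (Fin d) (Fin d) ℝ) (m cV : V → ℝ) (ω : ℝ)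

theorem zero_le_sum_star_dotProduct_dlap_map_ofReal [Fintype V]
    {M : E → Matrix (Fin d) (Fin d) ℝ} (hM : ∀ e, (M e).PosSemidef) (z : V → Fin d → ℂ) :
    0 ≤ ∑ i, star (z i) ⬝ᵥ dlap e1 e2 (fun e => (M e).map ((↑) : ℝ → ℂ)) z i := by
  rw [sum_star_dotProduct_dlap]
  exact Finset.sum_nonneg fun e _ => (hM e).map_ofReal_s19.dotProduct_mulVec_nonneg _

noncomputable def elastOpLinearMap : (V → Fin d → ℂ) →ₗ[ℂ] (V → Fin d → ℂ) where
  toFun := elastOp e1 e2 σ μ m cV ω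
  map_add' u v := by
    funext i
    simp only [elastOp, dlap_add, Pi.add_apply, smul_add]
    abel
  map_smul' c u := by
    funext i
    simp only [elastOp, dlap_smul, Pi.smul_apply, RingHom.id_apply, smul_add, smul_comm c]

theorem sum_mul_re_le_re_sum_star_dotProduct_elastOp [Fintype V]
    (hσ : ∀ e, (σ e).PosSemidef) (hμ : ∀ e, (μ e).PosSemidef) (z : V → Fin d → ℂ) :
    ∑ i, cV i * (star (z i) ⬝ᵥ z i).re
      ≤ (∑ i, star (z i) ⬝ᵥ elastOp e1 e2 σ μ m cV ω z i).re := by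
  have im_eq_zero {x : ℂ} (hx : 0 ≤ x) : x.im = 0 := (Complex.nonneg_iff.mp hx).2.symm
  have hσterm : ((Complex.I * ω)⁻¹ *
      ∑ i, star (z i) ⬝ᵥ dlap e1 e2 (fun e => (σ e).map ((↑) : ℝ → ℂ)) z i).re = 0 := by
    simp [Complex.mul_re, im_eq_zero (zero_le_sum_star_dotProduct_dlap_map_ofReal e1 e2 hσ z)]
  have hmterm : (Complex.I * ω * ∑ i, m i * (star (z i) ⬝ᵥ z i)).re = 0 := by
    simp [Complex.mul_re, Complex.im_sum, im_eq_zero (dotProduct_star_self_nonneg _)]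
  have hexpand : ∀ i, star (z i) ⬝ᵥ elastOp e1 e2 σ μ m cV ω z i
      = star (z i) ⬝ᵥ dlap e1 e2 (fun e => (μ e).map ((↑) : ℝ → ℂ)) z i
        + cV i * (star (z i) ⬝ᵥ z i)
        + (Complex.I * ω)⁻¹ * (star (z i) ⬝ᵥ dlap e1 e2 (fun e => (σ e).map ((↑) : ℝ → ℂ)) z i)
        + Complex.I * ω * (m i * (star (z i) ⬝ᵥ z i)) := fun i => by
    simp only [elastOp, dotProduct_add, dotProduct_smul, smul_eq_mul]
  calc ∑ i, cV i * (star (z i) ⬝ᵥ z i).re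
      ≤ (∑ i, star (z i) ⬝ᵥ dlap e1 e2 (fun e => (μ e).map ((↑) : ℝ → ℂ)) z i).re
        + ∑ i, cV i * (star (z i) ⬝ᵥ z i).re :=
        le_add_of_nonneg_left (Complex.nonneg_iff.mp (zero_le_sum_star_dotProduct_dlap_map_ofReal e1 e2 hμ z)).1
    _ = _ := by
      simp only [hexpand, Finset.sum_add_distrib, ← Finset.mul_sum, Complex.add_re, hσterm,
        hmterm, Complex.re_sum, Complex.re_ofReal_mul, add_zero]

theorem eq_zero_of_elastOp_eq_zero [Fintype V] (Bd : V → Prop)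
    (hσ : ∀ e, (σ e).PosSemidef) (hμ : ∀ e, (μ e).PosSemidef) (hcV : ∀ i, ¬ Bd i → 0 < cV i)
    (z : V → Fin d → ℂ) (hzB : ∀ i, Bd i → z i = 0)
    (hzI : ∀ i, ¬ Bd i → elastOp e1 e2 σ μ m cV ω z i = 0) : z = 0 := by
  have hform : ∑ i, star (z i) ⬝ᵥ elastOp e1 e2 σ μ m cV ω z i = 0 :=
    Finset.sum_eq_zero fun i _ => by
      by_cases hi : Bd i
      · simp [hzB i hi]
      · simp [hzI i hi]
  have hterm_nonneg : ∀ i ∈ Finset.univ, 0 ≤ cV i * (star (z i) ⬝ᵥ z i).re := fun i _ => by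
    by_cases hi : Bd i
    · simp [hzB i hi]
    · exact mul_nonneg (hcV i hi).le (Complex.nonneg_iff.mp (dotProduct_star_self_nonneg _)).1
  have hsum : ∑ i, cV i * (star (z i) ⬝ᵥ z i).re = 0 :=
    le_antisymm (by simpa only [hform, Complex.zero_re] using
      sum_mul_re_le_re_sum_star_dotProduct_elastOp e1 e2 σ μ m cV ω hσ hμ z)
      (Finset.sum_nonneg hterm_nonneg)
  funext i
  by_cases hi : Bd i
  · exact hzB i hi
  · have hre : (star (z i) ⬝ᵥ z i).re = 0 :=
      (mul_eq_zero.mp ((Finset.sum_eq_zero_iff_of_nonneg hterm_nonneg).mp hsum i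
        (Finset.mem_univ i))).resolve_left (hcV i hi).ne'
    refine dotProduct_star_self_eq_zero.mp (Complex.ext hre ?_)
    exact (Complex.nonneg_iff.mp (dotProduct_star_self_nonneg _)).2.symm

end ElasticOperator

theorem existsUnique_dirichlet_of_injective {K M V : Type*} [Field K] [AddCommGroup M]
    [Module K M] [FiniteDimensional K M] [Finite V] (Bd : V → Prop)
    (A : (V → M) →ₗ[K] (V → M))
    (hA : ∀ z, (∀ i, Bd i → z i = 0) → (∀ i, ¬ Bd i → A z i = 0) → z = 0) (g : V → M) :
    ∃! u : V → M, (∀ i, Bd i → u i = g i) ∧ ∀ i, ¬ Bd i → A u i = 0 := by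
  classical
  let T : (V → M) →ₗ[K] (V → M) :=
    LinearMap.pi fun i => if Bd i then LinearMap.proj i else LinearMap.proj i ∘ₗ A
  have hT : ∀ u i, T u i = if Bd i then u i else A u i := fun u i => by
    by_cases hi : Bd i <;> simp [T, hi]
  have hT_inj : Function.Injective T := by
    refine (injective_iff_map_eq_zero T).mpr fun z hz => hA z (fun i hi => ?_) fun i hi => ?_
    · simpa [hT, hi] using congrFun hz i
    · simpa [hT, hi] using congrFun hz i
  obtain ⟨u, hu⟩ := LinearMap.injective_iff_surjective.mp hT_inj fun i => if Bd i then g i else 0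
  have huB : ∀ i, Bd i → u i = g i := fun i hi => by simpa [hT, hi] using congrFun hu i
  have huI : ∀ i, ¬ Bd i → A u i = 0 := fun i hi => by simpa [hT, hi] using congrFun hu i
  refine ⟨u, ⟨huB, huI⟩, fun v ⟨hvB, hvI⟩ => sub_eq_zero.mp (hA (v - u) ?_ ?_)⟩
  · intro i hi
    simp [hvB i hi, huB i hi]
  · intro i hi
    simp [hvI i hi, huI i hi]

theorem elastodynamic_invertibility_general {V E : Type*} [Fintype V] [Fintype E]
    [DecidableEq V] {d : ℕ} (e1 e2 : E → V)
    (Bd : V → Prop)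
    (σ μ : E → Matrix (Fin d) (Fin d) ℝ)
    (hσ : ∀ e, (σ e).PosSemidef) (hμ : ∀ e, (μ e).PosSemidef)
    (m cV : V → ℝ) (hcV : ∀ i, ¬ Bd i → 0 < cV i)
    (ω : ℝ) :
    (∀ z : V → Fin d → ℂ, (∀ i, Bd i → z i = 0) →
      (∀ i, ¬ Bd i → elastOp e1 e2 σ μ m cV ω z i = 0) → z = 0) ∧
    (∀ g : V → Fin d → ℂ, ∃! u : V → Fin d → ℂ,
      (∀ i, Bd i → u i = g i) ∧
      ∀ i, ¬ Bd i → elastOp e1 e2 σ μ m cV ω u i = 0) :=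
  have hinj := eq_zero_of_elastOp_eq_zero e1 e2 σ μ m cV ω Bd hσ hμ hcV
  ⟨hinj, existsUnique_dirichlet_of_injective Bd (elastOpLinearMap e1 e2 σ μ m cV ω) hinj⟩

/-- **invertibility for damped elastodynamic networks.** For real
symmetric positive semidefinite edge weights `σ`, `μ` (stiffness and spring damping),
positive masses `m`, positive nodal damping `c_V` on the interior, and `ω ≠ 0`, the
interior frequency-domain operator
`A = (L_μ)_{II} + diag((c_V)_I) + (iω)⁻¹(L_σ)_{II} + iω diag(m_I)` is invertible
(stated as: only the zero interior-supported field is annihilated), so the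
frequency-domain Dirichlet problem has a unique solution for any boundary
displacement. -/
theorem elastodynamic_invertibility {V E : Type*} [Fintype V] [Fintype E]
    [DecidableEq V] {d : ℕ} (e1 e2 : E → V)
    (Bd : V → Prop) [DecidablePred Bd] (hBne : ∃ i, Bd i)
    (hconn : connWithin e1 e2 Set.univ)
    (hconnI : connWithin e1 e2 {v | ¬ Bd v})
    (σ μ : E → Matrix (Fin d) (Fin d) ℝ)
    (hσ : ∀ e, (σ e).PosSemidef) (hμ : ∀ e, (μ e).PosSemidef)
    (m cV : V → ℝ) (hm : ∀ i, 0 < m i) (hcV : ∀ i, ¬ Bd i → 0 < cV i)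
    (ω : ℝ) (hω : ω ≠ 0) :
    (∀ z : V → Fin d → ℂ, (∀ i, Bd i → z i = 0) →
      (∀ i, ¬ Bd i → elastOp e1 e2 σ μ m cV ω z i = 0) → z = 0) ∧
    (∀ g : V → Fin d → ℂ, ∃! u : V → Fin d → ℂ,
      (∀ i, Bd i → u i = g i) ∧
      ∀ i, ¬ Bd i → elastOp e1 e2 σ μ m cV ω u i = 0) :=
  elastodynamic_invertibility_general e1 e2 Bd σ μ hσ hμ m cV hcV ω
end
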